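/- arXiv:2106.00909 — 4 statements merged into one kernel-verified Lean document; each statement's English description precedes it below -/
import Mathlib

section
/- Let G = (V,E) be a finite simple graph, v ∈ V, and for a set S ⊆ V let d_v(S) denote the number of neighbors of v in S if v ∈ S, and 0 if v ∉ S. Then for any real p ≥ 1 and any sets S, T ⊆ V: d_v(S)^p + d_v(T)^p ≤ d_v(S ∩ T)^p + d_v(S ∪ T)^p. -/
/-!
Apart from the indicator of `v ∈ S`, `d_v(S) = |N(v) ∩ S|` is modular in `S`, and the indicator
can only be lost on `S ∩ T`; so `d_v` is monotone and supermodular. For a convex `f`,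
`f b + f c ≤ f a + f (b + c - a)` whenever `a ≤ b, c`, because `b` and `c` are convex combinations
of `a` and `b + c - a` with swapped weights; monotonicity of `x ↦ x ^ p` on `[0, ∞)` then lets the
last argument grow from `d_v(S) + d_v(T) - d_v(S ∩ T)` to `d_v(S ∪ T)`.
-/

noncomputable def indDeg {V : Type*} [DecidableEq V] (G : SimpleGraph V)
    (S : Finset V) (v : V) : ℕ :=
  if v ∈ S then Nat.card {u : V // u ∈ S ∧ G.Adj v u} else 0

theorem ConvexOn.add_le_add_of_add_eq {𝕜 : Type*} [Field 𝕜] [LinearOrder 𝕜]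
    [IsStrictOrderedRing 𝕜] {s : Set 𝕜} {f : 𝕜 → 𝕜} (hf : ConvexOn 𝕜 s f) {a b c d : 𝕜}
    (ha : a ∈ s) (hd : d ∈ s) (hab : a ≤ b) (hac : a ≤ c) (hsum : b + c = a + d) :
    f b + f c ≤ f a + f d := by
  rcases (hab.trans (by linarith : b ≤ d)).eq_or_lt with had | had
  · obtain rfl : b = a := by linarith
    obtain rfl : c = b := by linarith
    rw [had]
  have hda : 0 < d - a := sub_pos.2 had
  set t := (c - a) / (d - a) with ht
  set u := (b - a) / (d - a) with hu
  have htu : t + u = 1 := by rw [ht, hu]; field_simp; linear_combination hsum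
  have hb : t • a + u • d = b := by
    rw [smul_eq_mul, smul_eq_mul, ht, hu]; field_simp; linear_combination a * hsum
  have hc : u • a + t • d = c := by
    rw [smul_eq_mul, smul_eq_mul, ht, hu]; field_simp; linear_combination a * hsum
  have ht0 : 0 ≤ t := div_nonneg (sub_nonneg.2 hac) hda.le
  have hu0 : 0 ≤ u := div_nonneg (sub_nonneg.2 hab) hda.le
  have hfb := hb ▸ hf.2 ha hd ht0 hu0 htu
  have hfc := hc ▸ hf.2 ha hd hu0 ht0 (by rwa [add_comm])
  simp only [smul_eq_mul] at hfb hfc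
  linear_combination hfb + hfc + (f a + f d) * htu

theorem ConvexOn.add_le_add_of_add_le {𝕜 : Type*} [Field 𝕜] [LinearOrder 𝕜]
    [IsStrictOrderedRing 𝕜] {s : Set 𝕜} {f : 𝕜 → 𝕜} (hf : ConvexOn 𝕜 s f)
    (hmono : MonotoneOn f s) {a b c e : 𝕜} (ha : a ∈ s) (he : e ∈ s) (hab : a ≤ b) (hac : a ≤ c)
    (hsum : b + c ≤ a + e) : f b + f c ≤ f a + f e := by
  have hd : b + c - a ∈ s := hf.1.ordConnected.out ha he ⟨by linarith, by linarith⟩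
  calc f b + f c ≤ f a + f (b + c - a) := hf.add_le_add_of_add_eq ha hd hab hac (by ring)
    _ ≤ f a + f e := by gcongr; exact hmono hd he (by linarith)

namespace SimpleGraph

variable {V : Type*} [DecidableEq V] (G : SimpleGraph V) {S T : Finset V} {v : V}

theorem indDeg_of_mem (hv : v ∈ S) : indDeg G S v = (↑S ∩ G.neighborSet v).ncard := by
  rw [indDeg, if_pos hv, ← Nat.card_coe_set_eq]
  rfl

theorem indDeg_of_notMem (hv : v ∉ S) : indDeg G S v = 0 := if_neg hv

theorem indDeg_mono (hST : S ⊆ T) : indDeg G S v ≤ indDeg G T v := by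
  by_cases hvS : v ∈ S
  · rw [indDeg_of_mem G hvS, indDeg_of_mem G (hST hvS)]
    exact Set.ncard_le_ncard (by gcongr) (T.finite_toSet.inter_of_left _)
  · simp [indDeg_of_notMem G hvS]

theorem indDeg_add_indDeg_le_indDeg_inter_add_indDeg_union (S T : Finset V) :
    indDeg G S v + indDeg G T v ≤ indDeg G (S ∩ T) v + indDeg G (S ∪ T) v := by
  by_cases hvS : v ∈ S <;> by_cases hvT : v ∈ T
  · rw [indDeg_of_mem G hvS, indDeg_of_mem G hvT, indDeg_of_mem G (Finset.mem_inter.2 ⟨hvS, hvT⟩),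
      indDeg_of_mem G (Finset.mem_union_left T hvS), Finset.coe_inter, Finset.coe_union,
      Set.inter_inter_distrib_right, Set.union_inter_distrib_right,
      Set.ncard_inter_add_ncard_union _ _ (S.finite_toSet.inter_of_left _)
        (T.finite_toSet.inter_of_left _)]
  · rw [indDeg_of_notMem G hvT, indDeg_of_notMem G (fun h ↦ hvT (Finset.mem_inter.1 h).2)]
    simpa using indDeg_mono G Finset.subset_union_left
  · rw [indDeg_of_notMem G hvS, indDeg_of_notMem G (fun h ↦ hvS (Finset.mem_inter.1 h).1)]
    simpa using indDeg_mono G Finset.subset_union_right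
  · simp [indDeg_of_notMem G hvS, indDeg_of_notMem G hvT]

end SimpleGraph

theorem indDeg_rpow_supermodular_general {V : Type*} [DecidableEq V]
    (G : SimpleGraph V) (v : V) (p : ℝ) (hp : 1 ≤ p) (S T : Finset V) :
    (indDeg G S v : ℝ) ^ p + (indDeg G T v : ℝ) ^ p ≤
      (indDeg G (S ∩ T) v : ℝ) ^ p + (indDeg G (S ∪ T) v : ℝ) ^ p := by
  have hS : (indDeg G (S ∩ T) v : ℝ) ≤ indDeg G S v := by
    exact_mod_cast G.indDeg_mono Finset.inter_subset_left
  have hT : (indDeg G (S ∩ T) v : ℝ) ≤ indDeg G T v := by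
    exact_mod_cast G.indDeg_mono Finset.inter_subset_right
  have hsuper : (indDeg G S v : ℝ) + indDeg G T v ≤ indDeg G (S ∩ T) v + indDeg G (S ∪ T) v := by
    exact_mod_cast G.indDeg_add_indDeg_le_indDeg_inter_add_indDeg_union S T
  exact (convexOn_rpow hp).add_le_add_of_add_le
    (Real.monotoneOn_rpow_Ici_of_exponent_nonneg (by linarith))
    (Set.mem_Ici.2 (Nat.cast_nonneg _)) (Set.mem_Ici.2 (Nat.cast_nonneg _)) hS hT hsuper

theorem indDeg_rpow_supermodular {V : Type*} [Fintype V] [DecidableEq V]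
    (G : SimpleGraph V) (v : V) (p : ℝ) (hp : 1 ≤ p) (S T : Finset V) :
    (indDeg G S v : ℝ) ^ p + (indDeg G T v : ℝ) ^ p ≤
      (indDeg G (S ∩ T) v : ℝ) ^ p + (indDeg G (S ∪ T) v : ℝ) ^ p :=
  indDeg_rpow_supermodular_general G v p hp S T
end

section
/- Let G = (V,E) be a finite simple graph and p ≥ 1 a real number. The function h(S) = Σ_{v∈S} d_v(S)^p on subsets S ⊆ V is supermodular: h(S) + h(T) ≤ h(S∩T) + h(S∪T) for all S, T ⊆ V. -/
/-!
Extend every sum to `S ∪ T` by zeros and compare vertex by vertex. For each `v`, the induced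
degrees satisfy `d_v(S ∩ T) ≤ d_v(S), d_v(T) ≤ d_v(S ∪ T)` and
`d_v(S) + d_v(T) ≤ d_v(S ∩ T) + d_v(S ∪ T)` (inclusion–exclusion on the neighbourhood of `v`,
with equality when `v ∈ S ∩ T`). For `f` convex, points `a, b` of `[m, M]` with
`a + b = m + M` satisfy `f a + f b ≤ f m + f M`; when the sum is smaller, monotonicity of `f`
reduces to that case. Apply this with `f x = x ^ p`.
-/

open Finset

section Convex

variable {𝕜 : Type*} [Field 𝕜] [LinearOrder 𝕜] [IsStrictOrderedRing 𝕜] {s : Set 𝕜} {f : 𝕜 → 𝕜}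
  {m a b M : 𝕜}

theorem ConvexOn.map_add_map_le_of_add_eq (hf : ConvexOn 𝕜 s f) (hm : m ∈ s) (hM : M ∈ s)
    (hma : m ≤ a) (haM : a ≤ M) (hab : a + b = m + M) : f a + f b ≤ f m + f M := by
  obtain hmM | hmM := (hma.trans haM).eq_or_lt
  · obtain rfl : a = m := le_antisymm (hmM ▸ haM) hma
    obtain rfl : b = a := by linarith
    rw [hmM]
  set θ := (a - m) / (M - m)
  have hθ₀ : 0 ≤ θ := div_nonneg (by linarith) (by linarith)
  have hθ₁ : θ ≤ 1 := (div_le_one (by linarith)).2 (by linarith)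
  have hθ : θ * (M - m) = a - m := div_mul_cancel₀ _ (by linarith)
  have ha := hf.2 hm hM (sub_nonneg.2 hθ₁) hθ₀ (sub_add_cancel 1 θ)
  have hb := hf.2 hm hM hθ₀ (sub_nonneg.2 hθ₁) (add_sub_cancel θ 1)
  simp only [smul_eq_mul] at ha hb
  rw [show (1 - θ) * m + θ * M = a by linear_combination hθ] at ha
  rw [show θ * m + (1 - θ) * M = b by linear_combination -hθ - hab] at hb
  linarith

theorem ConvexOn.map_add_map_le_of_add_le (hf : ConvexOn 𝕜 s f) (hmono : MonotoneOn f s)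
    (hm : m ∈ s) (hM : M ∈ s) (hb : b ∈ s) (hma : m ≤ a) (haM : a ≤ M) (hab : a + b ≤ m + M) :
    f a + f b ≤ f m + f M := by
  have hb' : m + M - a ∈ s := hf.1.ordConnected.out hm hM ⟨by linarith, by linarith⟩
  have := hf.map_add_map_le_of_add_eq hm hM hma haM (add_sub_cancel _ _)
  linarith [hmono hb hb' (by linarith)]

end Convex

section indDeg

variable {V : Type*} [DecidableEq V] (G : SimpleGraph V) {S T : Finset V} {v : V}

theorem indDeg_of_notMem (hv : v ∉ S) : indDeg G S v = 0 := if_neg hv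

theorem indDeg_of_mem [DecidableRel G.Adj] (hv : v ∈ S) :
    indDeg G S v = #{u ∈ S | G.Adj v u} := by
  rw [indDeg, if_pos hv, ← Nat.card_eq_finsetCard]
  exact Nat.card_congr (Equiv.subtypeEquivRight fun u => mem_filter.symm)

theorem indDeg_mono (h : S ⊆ T) : indDeg G S v ≤ indDeg G T v := by
  classical
  by_cases hv : v ∈ S
  · rw [indDeg_of_mem G hv, indDeg_of_mem G (h hv)]
    exact card_le_card (filter_subset_filter _ h)
  · simp [indDeg_of_notMem G hv]

theorem indDeg_add_indDeg_le (S T : Finset V) (v : V) :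
    indDeg G S v + indDeg G T v ≤ indDeg G (S ∩ T) v + indDeg G (S ∪ T) v := by
  classical
  by_cases hvS : v ∈ S <;> by_cases hvT : v ∈ T
  · rw [indDeg_of_mem G hvS, indDeg_of_mem G hvT, indDeg_of_mem G (mem_inter.2 ⟨hvS, hvT⟩),
      indDeg_of_mem G (mem_union_left _ hvS), filter_inter_distrib, filter_union,
      card_inter_add_card_union]
  · rw [indDeg_of_notMem G hvT, indDeg_of_notMem G fun h => hvT (mem_inter.1 h).2]
    simpa using indDeg_mono G (v := v) subset_union_left
  · rw [indDeg_of_notMem G hvS, indDeg_of_notMem G fun h => hvS (mem_inter.1 h).1]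
    simpa using indDeg_mono G (v := v) subset_union_right
  · simp [indDeg_of_notMem G hvS, indDeg_of_notMem G hvT]

variable {f : ℝ → ℝ}

theorem sum_comp_indDeg_of_subset (hf₀ : f 0 = 0) {U : Finset V} (h : S ⊆ U) :
    ∑ v ∈ S, f (indDeg G S v) = ∑ v ∈ U, f (indDeg G S v) :=
  sum_subset h fun v _ hv => by rw [indDeg_of_notMem G hv, Nat.cast_zero, hf₀]

theorem comp_indDeg_add_comp_indDeg_le (hf : ConvexOn ℝ (Set.Ici 0) f)
    (hmono : MonotoneOn f (Set.Ici 0)) (S T : Finset V) (v : V) :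
    f (indDeg G S v) + f (indDeg G T v) ≤ f (indDeg G (S ∩ T) v) + f (indDeg G (S ∪ T) v) :=
  have h₀ (n : ℕ) : (n : ℝ) ∈ Set.Ici 0 := Set.mem_Ici.2 n.cast_nonneg
  hf.map_add_map_le_of_add_le hmono (h₀ _) (h₀ _) (h₀ _)
    (mod_cast indDeg_mono G inter_subset_left) (mod_cast indDeg_mono G subset_union_left)
    (mod_cast indDeg_add_indDeg_le G S T v)

theorem sum_comp_indDeg_supermodular (hf : ConvexOn ℝ (Set.Ici 0) f)
    (hmono : MonotoneOn f (Set.Ici 0)) (hf₀ : f 0 = 0) (S T : Finset V) :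
    ∑ v ∈ S, f (indDeg G S v) + ∑ v ∈ T, f (indDeg G T v) ≤
      ∑ v ∈ S ∩ T, f (indDeg G (S ∩ T) v) + ∑ v ∈ S ∪ T, f (indDeg G (S ∪ T) v) := by
  rw [sum_comp_indDeg_of_subset G hf₀ (subset_union_left : S ⊆ S ∪ T),
    sum_comp_indDeg_of_subset G hf₀ (subset_union_right : T ⊆ S ∪ T),
    sum_comp_indDeg_of_subset G hf₀ inter_subset_union, ← sum_add_distrib, ← sum_add_distrib]
  exact sum_le_sum fun v _ => comp_indDeg_add_comp_indDeg_le G hf hmono S T v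

end indDeg

theorem sum_indDeg_rpow_supermodular_general {V : Type*} [DecidableEq V]
    (G : SimpleGraph V) (p : ℝ) (hp : 1 ≤ p) (S T : Finset V) :
    (∑ v ∈ S, (indDeg G S v : ℝ) ^ p) + (∑ v ∈ T, (indDeg G T v : ℝ) ^ p) ≤
      (∑ v ∈ S ∩ T, (indDeg G (S ∩ T) v : ℝ) ^ p) +
        (∑ v ∈ S ∪ T, (indDeg G (S ∪ T) v : ℝ) ^ p) :=
  sum_comp_indDeg_supermodular G (convexOn_rpow hp)
    (Real.monotoneOn_rpow_Ici_of_exponent_nonneg (by linarith)) (Real.zero_rpow (by linarith)) S T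

theorem sum_indDeg_rpow_supermodular {V : Type*} [Fintype V] [DecidableEq V]
    (G : SimpleGraph V) (p : ℝ) (hp : 1 ≤ p) (S T : Finset V) :
    (∑ v ∈ S, (indDeg G S v : ℝ) ^ p) + (∑ v ∈ T, (indDeg G T v : ℝ) ^ p) ≤
      (∑ v ∈ S ∩ T, (indDeg G (S ∩ T) v : ℝ) ^ p) +
        (∑ v ∈ S ∪ T, (indDeg G (S ∪ T) v : ℝ) ^ p) :=
  sum_indDeg_rpow_supermodular_general G p hp S T
end

section
/- Let G = (V,E) be a finite simple graph with n nodes, p ≥ 1, and let S_0 = V ⊇ S_1 ⊇ … ⊇ S_{n} be the sets produced by the generalized peeling algorithm that at each step removes a node j minimizing Δ_j(S_{i−1}). Then max_i f_p(S_i) ≥ (1/(p+1))·max_{∅≠T⊆V} f_p(T). -/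
/-- `Δ_j(S) = d_j(S)^p + Σ_{i ∈ N(j)∩S} (d_i(S)^p − (d_i(S)−1)^p)`
(note `j ∉ N(j)` since the graph is simple). -/
noncomputable def DeltaP {V : Type*} [DecidableEq V] (G : SimpleGraph V)
    [DecidableRel G.Adj] (p : ℝ) (S : Finset V) (j : V) : ℝ :=
  (indDeg G S j : ℝ) ^ p +
    ∑ i ∈ S.filter (fun i => G.Adj j i ∧ i ≠ j),
      ((indDeg G S i : ℝ) ^ p - ((indDeg G S i : ℝ) - 1) ^ p)

/-- `f_p(S) = (1/|S|) Σ_{v∈S} d_v(S)^p`. -/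
noncomputable def fp {V : Type*} [DecidableEq V] (G : SimpleGraph V)
    (p : ℝ) (S : Finset V) : ℝ :=
  (1 / (S.card : ℝ)) * ∑ v ∈ S, (indDeg G S v : ℝ) ^ p

/-!
Let `T` be a nonempty set maximising `f_p`. Deleting any `j ∈ T` removes exactly `Δ_j(T)` from
`Σ_{v ∈ T} d_v(T)^p`, and what is left is at most `(|T| - 1) f_p(T)` by maximality, so
`Δ_j(T) ≥ f_p(T)` for every `j ∈ T`. Consider the first round `i` in which the peeling deletes a node
`j` of `T`; then `T ⊆ S_i`, and since `d ↦ d^p - (d-1)^p` is nondecreasing for `p ≥ 1`,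
`Δ_j(T) ≤ Δ_j(S_i)`. The node `j` minimises `Δ` over `S_i`, and double counting together with
`d (d^p - (d-1)^p) ≤ p d^p` gives `Σ_{k ∈ S_i} Δ_k(S_i) ≤ (p+1) |S_i| f_p(S_i)`. Hence
`f_p(T) ≤ Δ_j(S_i) ≤ (p+1) f_p(S_i)`.
-/

open Finset

lemma ConvexOn.sub_le_sub_of_le {𝕜 : Type*} [Field 𝕜] [LinearOrder 𝕜] [IsStrictOrderedRing 𝕜]
    {s : Set 𝕜} {f : 𝕜 → 𝕜} (hf : ConvexOn 𝕜 s f) {x y h : 𝕜} (hxh : x - h ∈ s) (hy : y ∈ s)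
    (hh : 0 < h) (hxy : x ≤ y) : f x - f (x - h) ≤ f y - f (y - h) := by
  have hIcc : Set.Icc (x - h) y ⊆ s := hf.1.ordConnected.out hxh hy
  have hx : x ∈ s := hIcc ⟨by linarith, hxy⟩
  have hyh : y - h ∈ s := hIcc ⟨by linarith, by linarith⟩
  have h₁ : (f x - f (x - h)) / h ≤ (f y - f (x - h)) / (y - (x - h)) := by
    simpa only [sub_sub_cancel] using hf.secant_mono hxh hx hy (by linarith) (by linarith) hxy
  have h₂ : (f y - f (x - h)) / (y - (x - h)) ≤ (f y - f (y - h)) / h := by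
    have := hf.secant_mono hy hxh hyh (by linarith) (by linarith) (by linarith)
    rwa [← neg_div_neg_eq, neg_sub, neg_sub, ← neg_div_neg_eq (f (y - h) - f y), neg_sub, neg_sub,
      sub_sub_cancel] at this
  exact (div_le_div_iff_of_pos_right hh).mp (h₁.trans h₂)

lemma rpow_sub_rpow_sub_one_le {p x y : ℝ} (hp : 1 ≤ p) (hx : 1 ≤ x) (hxy : x ≤ y) :
    x ^ p - (x - 1) ^ p ≤ y ^ p - (y - 1) ^ p :=
  (convexOn_rpow hp).sub_le_sub_of_le (by simp; linarith) (by simp; linarith) one_pos hxy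

/-- Bernoulli's inequality `(1 - 1/x)^p ≥ 1 - p/x`, multiplied by `x^(p+1)`. -/
lemma mul_rpow_sub_rpow_sub_one_le {p x : ℝ} (hp : 1 ≤ p) (hx : 1 ≤ x) :
    x * (x ^ p - (x - 1) ^ p) ≤ p * x ^ p := by
  have hx₀ : 0 < x := by linarith
  have hbern := one_add_mul_self_le_rpow_one_add (s := -1 / x)
    (by rw [neg_div, neg_le_neg_iff, div_le_one hx₀]; exact hx) hp
  rw [show 1 + -1 / x = (x - 1) / x by field_simp; ring,
    Real.div_rpow (by linarith) hx₀.le, le_div_iff₀ (by positivity)] at hbern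
  have : (1 + p * (-1 / x)) * x ^ p * x = x * x ^ p - p * x ^ p := by field_simp; ring
  nlinarith [this]

section InducedDegree

variable {V : Type*} [DecidableEq V] (G : SimpleGraph V)

lemma indDeg_eq_card_filter [DecidableRel G.Adj] {S : Finset V} {v : V} (hv : v ∈ S) :
    indDeg G S v = #(S.filter (G.Adj v)) := by
  rw [indDeg, if_pos hv, ← Nat.card_eq_finsetCard]
  exact Nat.card_congr (Equiv.subtypeEquivRight (by simp))

lemma card_mul_fp (p : ℝ) (U : Finset V) :
    (#U : ℝ) * fp G p U = ∑ v ∈ U, (indDeg G U v : ℝ) ^ p := by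
  rcases U.eq_empty_or_nonempty with rfl | hU
  · simp
  · rw [fp, ← mul_assoc, mul_one_div_cancel (by exact_mod_cast hU.card_pos.ne'), one_mul]

lemma sum_indDeg_rpow_le_card_mul {p c : ℝ} {U : Finset V} (h : U.Nonempty → fp G p U ≤ c) :
    ∑ v ∈ U, (indDeg G U v : ℝ) ^ p ≤ #U * c := by
  rcases U.eq_empty_or_nonempty with rfl | hU
  · simp
  · rw [← card_mul_fp]
    exact mul_le_mul_of_nonneg_left (h hU) (Nat.cast_nonneg _)

variable [DecidableRel G.Adj]

lemma indDeg_le_of_subset {S T : Finset V} (hTS : T ⊆ S) {v : V} (hv : v ∈ T) :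
    indDeg G T v ≤ indDeg G S v := by
  rw [indDeg_eq_card_filter G hv, indDeg_eq_card_filter G (hTS hv)]
  exact card_le_card (filter_subset_filter _ hTS)

lemma one_le_indDeg_of_adj {S : Finset V} {v w : V} (hv : v ∈ S) (hw : w ∈ S) (hvw : G.Adj v w) :
    1 ≤ indDeg G S v := by
  rw [indDeg_eq_card_filter G hv]
  exact card_pos.mpr ⟨w, mem_filter.mpr ⟨hw, hvw⟩⟩

lemma indDeg_eq_indDeg_erase_add {S : Finset V} {j v : V} (hj : j ∈ S) (hv : v ∈ S.erase j) :
    indDeg G S v = indDeg G (S.erase j) v + if G.Adj v j then 1 else 0 := by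
  rw [indDeg_eq_card_filter G (mem_of_mem_erase hv), indDeg_eq_card_filter G hv, filter_erase]
  split_ifs with h
  · rw [card_erase_add_one (mem_filter.mpr ⟨hj, h⟩)]
  · rw [erase_eq_of_notMem (by simp [h]), add_zero]

lemma sum_indDeg_rpow_eq_sum_erase_add_DeltaP (p : ℝ) {S : Finset V} {j : V} (hj : j ∈ S) :
    ∑ v ∈ S, (indDeg G S v : ℝ) ^ p
      = ∑ v ∈ S.erase j, (indDeg G (S.erase j) v : ℝ) ^ p + DeltaP G p S j := by
  have hterm : ∀ v ∈ S.erase j, (indDeg G S v : ℝ) ^ p = (indDeg G (S.erase j) v : ℝ) ^ p +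
      if G.Adj j v then (indDeg G S v : ℝ) ^ p - ((indDeg G S v : ℝ) - 1) ^ p else 0 := by
    intro v hv
    have hdeg := indDeg_eq_indDeg_erase_add G hj hv
    by_cases h : G.Adj v j
    · rw [if_pos h.symm, hdeg, if_pos h]
      push_cast [add_sub_cancel_right]
      ring
    · rw [if_neg (fun h' => h h'.symm), hdeg, if_neg h, add_zero, add_zero]
  have hnbr : S.filter (fun i => G.Adj j i ∧ i ≠ j) = (S.erase j).filter (G.Adj j) := by
    ext x
    simp only [mem_filter, mem_erase]
    tauto
  rw [← add_sum_erase _ _ hj, sum_congr rfl hterm, sum_add_distrib, DeltaP, hnbr, sum_filter]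
  ring

/-- Each `Δ_k` charges `d_i^p - (d_i - 1)^p` to each of the `d_i` neighbours `i` of `k`. -/
lemma sum_DeltaP_le {p : ℝ} (hp : 1 ≤ p) (S : Finset V) :
    ∑ j ∈ S, DeltaP G p S j ≤ (p + 1) * ∑ v ∈ S, (indDeg G S v : ℝ) ^ p := by
  have hcount : ∑ j ∈ S, ∑ i ∈ S.filter (fun i => G.Adj j i ∧ i ≠ j),
        ((indDeg G S i : ℝ) ^ p - ((indDeg G S i : ℝ) - 1) ^ p)
      = ∑ i ∈ S, (indDeg G S i : ℝ) *
        ((indDeg G S i : ℝ) ^ p - ((indDeg G S i : ℝ) - 1) ^ p) := by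
    simp_rw [sum_filter]
    rw [sum_comm]
    refine sum_congr rfl fun i hi => ?_
    rw [← sum_filter, sum_const, nsmul_eq_mul, indDeg_eq_card_filter G hi]
    congr 3
    ext k
    simp only [mem_filter, G.adj_comm k i]
    exact and_congr_right fun _ => and_iff_left_of_imp fun h => h.ne
  have hbound : ∀ i ∈ S, (indDeg G S i : ℝ) *
      ((indDeg G S i : ℝ) ^ p - ((indDeg G S i : ℝ) - 1) ^ p) ≤ p * (indDeg G S i : ℝ) ^ p := by
    intro i _
    rcases Nat.eq_zero_or_pos (indDeg G S i) with h | h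
    · simp [h, Real.zero_rpow (by linarith : p ≠ 0)]
    · exact mul_rpow_sub_rpow_sub_one_le hp (by exact_mod_cast h)
  simp only [DeltaP, sum_add_distrib, hcount]
  linarith [sum_le_sum hbound, mul_sum S (fun i => (indDeg G S i : ℝ) ^ p) p]

lemma DeltaP_le_of_subset {p : ℝ} (hp : 1 ≤ p) {T S : Finset V} (hTS : T ⊆ S) {j : V}
    (hj : j ∈ T) : DeltaP G p T j ≤ DeltaP G p S j := by
  have hp₀ : 0 ≤ p := by linarith
  refine add_le_add (Real.rpow_le_rpow (Nat.cast_nonneg _)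
    (Nat.cast_le.mpr (indDeg_le_of_subset G hTS hj)) hp₀) ?_
  calc ∑ i ∈ T.filter (fun i => G.Adj j i ∧ i ≠ j),
        ((indDeg G T i : ℝ) ^ p - ((indDeg G T i : ℝ) - 1) ^ p)
      ≤ ∑ i ∈ T.filter (fun i => G.Adj j i ∧ i ≠ j),
        ((indDeg G S i : ℝ) ^ p - ((indDeg G S i : ℝ) - 1) ^ p) := by
        refine sum_le_sum fun i hi => ?_
        obtain ⟨hiT, hji, -⟩ := mem_filter.mp hi
        exact rpow_sub_rpow_sub_one_le hp
          (by exact_mod_cast one_le_indDeg_of_adj G hiT hj hji.symm)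
          (by exact_mod_cast indDeg_le_of_subset G hTS hiT)
    _ ≤ ∑ i ∈ S.filter (fun i => G.Adj j i ∧ i ≠ j),
        ((indDeg G S i : ℝ) ^ p - ((indDeg G S i : ℝ) - 1) ^ p) := by
        refine sum_le_sum_of_subset_of_nonneg (filter_subset_filter _ hTS) fun i hi _ => ?_
        obtain ⟨hiS, hji, -⟩ := mem_filter.mp hi
        have h₁ : (1 : ℝ) ≤ indDeg G S i := by
          exact_mod_cast one_le_indDeg_of_adj G hiS (hTS hj) hji.symm
        exact sub_nonneg.mpr (Real.rpow_le_rpow (by linarith) (by linarith) hp₀)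

lemma fp_le_DeltaP_of_forall_fp_le (p : ℝ) {T : Finset V}
    (hmax : ∀ U : Finset V, U.Nonempty → fp G p U ≤ fp G p T) {j : V} (hj : j ∈ T) :
    fp G p T ≤ DeltaP G p T j := by
  have hrest := sum_indDeg_rpow_le_card_mul G (U := T.erase j) fun h => hmax _ h
  have hcard : (#(T.erase j) : ℝ) = #T - 1 := by
    rw [← card_erase_add_one hj]
    push_cast
    ring
  rw [hcard, sub_one_mul] at hrest
  linarith [card_mul_fp G p T, sum_indDeg_rpow_eq_sum_erase_add_DeltaP G p hj]

lemma DeltaP_le_of_forall_DeltaP_le {p : ℝ} (hp : 1 ≤ p) {S : Finset V} {j : V} (hj : j ∈ S)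
    (hmin : ∀ k ∈ S, DeltaP G p S j ≤ DeltaP G p S k) :
    DeltaP G p S j ≤ (p + 1) * fp G p S := by
  have hcard : (0 : ℝ) < #S := by exact_mod_cast card_pos.mpr ⟨j, hj⟩
  have havg : (#S : ℝ) * DeltaP G p S j ≤ ∑ k ∈ S, DeltaP G p S k := by
    simpa only [nsmul_eq_mul] using card_nsmul_le_sum S (DeltaP G p S) _ hmin
  have htotal := sum_DeltaP_le G hp S
  rw [← card_mul_fp] at htotal
  refine le_of_mul_le_mul_left ?_ hcard
  linarith

end InducedDegree

section Peeling

variable {α : Type*} [DecidableEq α] {S : ℕ → Finset α} {j : ℕ → α} {n : ℕ}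

lemma card_add_eq_card_of_erase (hj : ∀ i < n, j i ∈ S i)
    (hS : ∀ i < n, S (i + 1) = (S i).erase (j i)) : ∀ i ≤ n, #(S i) + i = #(S 0)
  | 0, _ => rfl
  | i + 1, hi => by
    rw [← card_add_eq_card_of_erase hj hS i (by omega), hS i hi,
      ← card_erase_add_one (hj i hi)]
    omega

lemma exists_subset_and_mem_of_erase (hj : ∀ i < n, j i ∈ S i)
    (hS : ∀ i < n, S (i + 1) = (S i).erase (j i)) (hn : #(S 0) = n) {T : Finset α}
    (hT : T.Nonempty) (hT0 : T ⊆ S 0) : ∃ i < n, T ⊆ S i ∧ j i ∈ T := by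
  by_contra! hnot
  have hsub : ∀ i ≤ n, T ⊆ S i := by
    intro i
    induction i with
    | zero => exact fun _ => hT0
    | succ i ih =>
      intro hi
      have hTi := ih (by omega)
      rw [hS i hi, subset_erase]
      exact ⟨hTi, hnot i hi hTi⟩
  have := card_le_card (hsub n le_rfl)
  have := card_add_eq_card_of_erase hj hS n le_rfl
  have := hT.card_pos
  omega

end Peeling

theorem genPeel_approx {V : Type*} [Fintype V] [DecidableEq V]
    (G : SimpleGraph V) [DecidableRel G.Adj] (p : ℝ) (hp : 1 ≤ p)
    (S : ℕ → Finset V) (h0 : S 0 = Finset.univ)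
    (hstep : ∀ i < Fintype.card V, ∃ j ∈ S i,
      (∀ k ∈ S i, DeltaP G p (S i) j ≤ DeltaP G p (S i) k) ∧
      S (i + 1) = (S i).erase j) :
    ∃ i ≤ Fintype.card V, ∀ T : Finset V, T.Nonempty →
      (1 / (p + 1)) * fp G p T ≤ fp G p (S i) := by
  rcases isEmpty_or_nonempty V with hV | hV
  · exact ⟨0, Nat.zero_le _, fun T hT => (IsEmpty.false hT.choose).elim⟩
  choose! j hjS hjmin hSe using hstep
  obtain ⟨T, hT, hTmax⟩ := exists_max_image ((univ : Finset (Finset V)).filter Finset.Nonempty)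
    (fp G p) ⟨univ, by simp⟩
  replace hT : T.Nonempty := (mem_filter.mp hT).2
  replace hTmax : ∀ U : Finset V, U.Nonempty → fp G p U ≤ fp G p T :=
    fun U hU => hTmax U (mem_filter.mpr ⟨mem_univ _, hU⟩)
  obtain ⟨i, hi, hTS, hjT⟩ :=
    exists_subset_and_mem_of_erase hjS hSe (by rw [h0, card_univ]) hT (h0 ▸ subset_univ T)
  refine ⟨i, hi.le, fun U hU => ?_⟩
  have hT_le : fp G p T ≤ (p + 1) * fp G p (S i) :=
    calc fp G p T ≤ DeltaP G p T (j i) := fp_le_DeltaP_of_forall_fp_le G p hTmax hjT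
      _ ≤ DeltaP G p (S i) (j i) := DeltaP_le_of_subset G hp hTS hjT
      _ ≤ (p + 1) * fp G p (S i) := DeltaP_le_of_forall_DeltaP_le G hp (hjS i hi) (hjmin i hi)
  rw [one_div, inv_mul_le_iff₀ (by linarith)]
  exact (hTmax U hU).trans hT_le
end

section
/- Let p > 1 and d ≥ 1 be fixed. Let G be the disjoint union of a complete bipartite graph K_{D,d} (with parts of sizes D and d) and D disjoint cliques each of size d+2, with vertex sets V_1 (the bipartite part) and V_2 (the cliques). Then f_p(V_2) = (d+1)^p and f_p(V_1) = (D·d^p + d·D^p)/(d + D), and as D → ∞, f_p(V_2)/f_p(V_1) → 0. -/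
/-!
Induced degrees are computed summand by summand of the disjoint union: every vertex of a clique
on `d + 2` vertices has degree `d + 1`, and in `K_{D,d}` the `D` vertices have degree `d` and the
`d` vertices degree `D`. The ratio of the densities is then
`(d + 1)^p (d + D) / (D d^p + d D^p) ≤ (d + 1)^p · 2D / (d D^p)` for `D ≥ d`,
which tends to `0` because `p > 1`.
-/

open Filter

/-- Disjoint union of the complete bipartite graph `K_{D,d}` and
`D` disjoint cliques, each of size `d+2`. -/
def bipCliqueGraph (D d : ℕ) :
    SimpleGraph ((Fin D ⊕ Fin d) ⊕ (Fin D × Fin (d + 2))) :=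
  completeBipartiteGraph (Fin D) (Fin d) ⊕g
    SimpleGraph.fromRel (fun a b : Fin D × Fin (d + 2) => a.1 = b.1)

/-- The vertex set of the `K_{D,d}` part. -/
def V1 (D d : ℕ) : Finset ((Fin D ⊕ Fin d) ⊕ (Fin D × Fin (d + 2))) :=
  Finset.univ.filter (fun x => x.isLeft)

/-- The vertex set of the union of cliques. -/
def V2 (D d : ℕ) : Finset ((Fin D ⊕ Fin d) ⊕ (Fin D × Fin (d + 2))) :=
  Finset.univ.filter (fun x => x.isRight)


open SimpleGraph

section InducedDegree

variable {V : Type*} [DecidableEq V] (G : SimpleGraph V) {S : Finset V} {v : V}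

lemma indDeg_of_neighborSet_subset (hv : v ∈ S) (hS : G.neighborSet v ⊆ S) :
    indDeg G S v = (G.neighborSet v).ncard := by
  rw [indDeg, if_pos hv, ← Nat.card_coe_set_eq]
  exact Nat.card_congr (Equiv.subtypeEquivRight fun u => ⟨And.right, fun h => ⟨hS h, h⟩⟩)

lemma fp_eq_of_indDeg_eq (p : ℝ) (hS : S.Nonempty) {k : ℕ} (hk : ∀ v ∈ S, indDeg G S v = k) :
    fp G p S = (k : ℝ) ^ p := by
  rw [fp, Finset.sum_congr rfl fun v hv => by rw [hk v hv], Finset.sum_const, nsmul_eq_mul,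
    ← mul_assoc, one_div_mul_cancel (by exact_mod_cast hS.card_pos.ne'), one_mul]

end InducedDegree

section Sum

variable {V W : Type*} [DecidableEq V] [DecidableEq W] (G : SimpleGraph V) (H : SimpleGraph W)
  {S : Finset (V ⊕ W)}

lemma indDeg_sum_inl (hS : ∀ v, Sum.inl v ∈ S) (v : V) :
    indDeg (G ⊕g H) S (.inl v) = (G.neighborSet v).ncard := by
  have hsub : (G ⊕g H).neighborSet (.inl v) ⊆ S := by
    rw [neighborSet_sum_inl]
    exact Set.image_subset_iff.2 fun v' _ => hS v'
  rw [indDeg_of_neighborSet_subset _ (hS v) hsub, neighborSet_sum_inl,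
    Set.ncard_image_of_injective _ Sum.inl_injective]

lemma indDeg_sum_inr (hS : ∀ w, Sum.inr w ∈ S) (w : W) :
    indDeg (G ⊕g H) S (.inr w) = (H.neighborSet w).ncard := by
  have hsub : (G ⊕g H).neighborSet (.inr w) ⊆ S := by
    rw [neighborSet_sum_inr]
    exact Set.image_subset_iff.2 fun w' _ => hS w'
  rw [indDeg_of_neighborSet_subset _ (hS w) hsub, neighborSet_sum_inr,
    Set.ncard_image_of_injective _ Sum.inr_injective]

end Sum

lemma ncard_neighborSet_completeBipartiteGraph_inl {V W : Type*} (v : V) :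
    ((completeBipartiteGraph V W).neighborSet (.inl v)).ncard = Nat.card W := by
  have : (completeBipartiteGraph V W).neighborSet (.inl v) = Set.range Sum.inr := by
    ext (v' | w) <;> simp
  rw [this, Set.ncard_range_of_injective Sum.inr_injective]

lemma ncard_neighborSet_completeBipartiteGraph_inr {V W : Type*} (w : W) :
    ((completeBipartiteGraph V W).neighborSet (.inr w)).ncard = Nat.card V := by
  have : (completeBipartiteGraph V W).neighborSet (.inr w) = Set.range Sum.inl := by
    ext (v | w') <;> simp
  rw [this, Set.ncard_range_of_injective Sum.inl_injective]

lemma ncard_neighborSet_fromRel_fst_eq {α β : Type*} [Finite β] (x : α × β) :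
    ((fromRel fun a b : α × β => a.1 = b.1).neighborSet x).ncard = Nat.card β - 1 := by
  have : (fromRel fun a b : α × β => a.1 = b.1).neighborSet x =
      Prod.mk x.1 '' (Set.univ \ {x.2}) := by
    ext ⟨i, j⟩
    simp only [mem_neighborSet, fromRel_adj, ne_eq, Prod.mk.injEq, Set.mem_image,
      Set.mem_sdiff, Set.mem_univ, Set.mem_singleton_iff, true_and, exists_eq_right_right]
    grind
  rw [this, Set.ncard_image_of_injective _ (Prod.mk_right_injective x.1),
    Set.ncard_sdiff_singleton_of_mem (Set.mem_univ _), Set.ncard_univ]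

lemma V1_eq_map (D d : ℕ) : V1 D d = Finset.univ.map .inl := by
  ext (x | x) <;> simp [V1]

lemma V2_eq_map (D d : ℕ) : V2 D d = Finset.univ.map .inr := by
  ext (x | x) <;> simp [V2]

lemma fp_bipCliqueGraph_V1 (p : ℝ) (D d : ℕ) :
    fp (bipCliqueGraph D d) p (V1 D d) =
      ((D : ℝ) * (d : ℝ) ^ p + (d : ℝ) * (D : ℝ) ^ p) / ((d : ℝ) + D) := by
  have hmem : ∀ x, Sum.inl x ∈ V1 D d := by simp [V1]
  rw [fp, V1_eq_map, Finset.sum_map, Finset.card_map, Fintype.sum_sum_type]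
  simp only [bipCliqueGraph, Function.Embedding.inl_apply, ← V1_eq_map,
    indDeg_sum_inl _ _ hmem, ncard_neighborSet_completeBipartiteGraph_inl,
    ncard_neighborSet_completeBipartiteGraph_inr, Nat.card_eq_fintype_card, Finset.card_univ,
    Fintype.card_sum, Fintype.card_fin, Finset.sum_const, nsmul_eq_mul, Nat.cast_add]
  ring

lemma fp_bipCliqueGraph_V2 (p : ℝ) {D : ℕ} (hD : 0 < D) (d : ℕ) :
    fp (bipCliqueGraph D d) p (V2 D d) = ((d : ℝ) + 1) ^ p := by
  have hmem : ∀ x, Sum.inr x ∈ V2 D d := by simp [V2]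
  rw [fp_eq_of_indDeg_eq _ p ⟨.inr (⟨0, hD⟩, 0), hmem _⟩ (k := d + 1), Nat.cast_succ]
  intro v hv
  rw [V2_eq_map] at hv
  obtain ⟨x, -, rfl⟩ := Finset.mem_map.1 hv
  rw [bipCliqueGraph, Function.Embedding.inr_apply, indDeg_sum_inr _ _ hmem,
    ncard_neighborSet_fromRel_fst_eq]
  simp

lemma tendsto_add_div_mul_rpow_add_mul_rpow {p d : ℝ} (hp : 1 < p) (hd : 0 < d) :
    Tendsto (fun x : ℝ => (d + x) / (x * d ^ p + d * x ^ p)) atTop (nhds 0) := by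
  have hlim : Tendsto (fun x : ℝ => 2 / d * x ^ (-(p - 1))) atTop (nhds 0) := by
    simpa using (tendsto_rpow_neg_atTop (sub_pos.2 hp)).const_mul (2 / d)
  refine squeeze_zero' ?_ ?_ hlim
  · filter_upwards [eventually_gt_atTop 0] with x hx
    positivity
  filter_upwards [eventually_ge_atTop d] with x hx
  have hx0 : 0 < x := hd.trans_le hx
  calc (d + x) / (x * d ^ p + d * x ^ p) ≤ (2 * x) / (d * x ^ p) := by
        gcongr
        · linarith
        · exact le_add_of_nonneg_left (by positivity)
    _ = 2 / d * x ^ (-(p - 1)) := by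
        rw [Real.rpow_neg hx0.le, Real.rpow_sub_one hx0.ne']
        field_simp

theorem simplePeel_construction_densities (p : ℝ) (hp : 1 < p)
    (d : ℕ) (hd : 1 ≤ d) :
    (∀ D : ℕ, 0 < D →
      fp (bipCliqueGraph D d) p (V2 D d) = ((d : ℝ) + 1) ^ p ∧
      fp (bipCliqueGraph D d) p (V1 D d) =
        ((D : ℝ) * (d : ℝ) ^ p + (d : ℝ) * (D : ℝ) ^ p) / ((d : ℝ) + D)) ∧
    Tendsto (fun D : ℕ =>
        fp (bipCliqueGraph D d) p (V2 D d) / fp (bipCliqueGraph D d) p (V1 D d))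
      atTop (nhds 0) := by
  refine ⟨fun D hD => ⟨fp_bipCliqueGraph_V2 p hD d, fp_bipCliqueGraph_V1 p D d⟩, ?_⟩
  have hlim := ((tendsto_add_div_mul_rpow_add_mul_rpow hp (Nat.cast_pos.2 hd)).comp
    tendsto_natCast_atTop_atTop).const_mul (((d : ℝ) + 1) ^ p)
  rw [mul_zero] at hlim
  refine hlim.congr' ?_
  filter_upwards [eventually_gt_atTop 0] with D hD
  rw [Function.comp_apply, fp_bipCliqueGraph_V2 p hD d, fp_bipCliqueGraph_V1 p D d,
    div_div_eq_mul_div, mul_div_assoc]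
end
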